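/- Let C₁, C₂ ≥ 0 be reals and a, b ≥ 0 with a + b = 1. Then: (i) if b ≥ 1/3, min{C₂, 2b·C₂ + (1+b)·C₁} ≤ ((b+1)/(3b² − 2b + 1))·(a·C₁ + b·C₂); and (ii) for all b ∈ [0,1], min{C₂, 2b·C₂ + (1+b)·C₁} ≤ (1 + 3/(2√2))·(a·C₁ + b·C₂) ≤ 2.0607·(a·C₁ + b·C₂). -/

import Mathlib

/-!
On `1/3 ≤ b ≤ 1` the weights `(3b² - b)/D` and `(1 - b)/D`, with `D = 3b² - 2b + 1 > 0`, form a
convex combination, and combining `C₂` with `2b C₂ + (1 + b) C₁` by them gives exactly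
`(b + 1)/D · ((1 - b) C₁ + b C₂)`; the minimum is at most any convex combination. For `b ≤ 1/3`
the second candidate alone is at most `2 ((1 - b) C₁ + b C₂)`. Finally
`(b + 1)/D ≤ 1 + 3/(2√2)` for every real `b`, with equality at `b = √2 - 1`, and
`2 ≤ 1 + 3/(2√2) ≤ 2.0607`.
-/

open Real

lemma min_le_add_mul {α : Type*} [Semiring α] [LinearOrder α] [IsOrderedRing α]
    {x y s t : α} (hs : 0 ≤ s) (ht : 0 ≤ t) (hst : s + t = 1) :
    min x y ≤ s * x + t * y :=
  calc min x y = s * min x y + t * min x y := by rw [← add_mul, hst, one_mul]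
    _ ≤ s * x + t * y := by gcongr <;> simp

lemma three_mul_sq_sub_two_mul_add_one_pos (b : ℝ) : 0 < 3 * b ^ 2 - 2 * b + 1 := by
  nlinarith [sq_nonneg (3 * b - 1)]

lemma add_one_div_le_one_add_three_div_two_mul_sqrt_two (b : ℝ) :
    (b + 1) / (3 * b ^ 2 - 2 * b + 1) ≤ 1 + 3 / (2 * √2) := by
  have hs : √2 ^ 2 = 2 := sq_sqrt zero_le_two
  have hK : 3 / (2 * √2) = 3 * √2 / 4 := by
    field_simp
    rw [hs]
    norm_num
  rw [hK, div_le_iff₀ (three_mul_sq_sub_two_mul_add_one_pos b)]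
  -- modulo `√2 ^ 2 = 2` the difference of the two sides is `(12 + 9√2) (b - (√2 - 1))² / 4`
  have hsq := mul_nonneg (by positivity : (0 : ℝ) ≤ 12 + 9 * √2) (sq_nonneg (b - (√2 - 1)))
  linear_combination hsq / 4 + (9 * √2 / 4 - 9 * b / 2 - 3 / 2) * hs

lemma two_le_one_add_three_div_two_mul_sqrt_two : (2 : ℝ) ≤ 1 + 3 / (2 * √2) := by
  have h : 2 * √2 ≤ 3 := by nlinarith [sq_sqrt (zero_le_two : (0 : ℝ) ≤ 2), sqrt_nonneg 2]
  have : 1 ≤ 3 / (2 * √2) := (one_le_div (by positivity)).mpr h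
  linarith

lemma one_add_three_div_two_mul_sqrt_two_le : 1 + 3 / (2 * √2) ≤ (2.0607 : ℝ) := by
  have hs : (1.4142 : ℝ) ≤ √2 := (le_sqrt' (by norm_num)).mpr (by norm_num)
  rw [← le_sub_iff_add_le', div_le_iff₀ (by positivity)]
  nlinarith

variable {C₁ C₂ b : ℝ}

lemma min_le_of_one_third_le (h₁ : 1 / 3 ≤ b) (h₂ : b ≤ 1) :
    min C₂ (2 * b * C₂ + (1 + b) * C₁) ≤
      (b + 1) / (3 * b ^ 2 - 2 * b + 1) * ((1 - b) * C₁ + b * C₂) := by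
  have hD := three_mul_sq_sub_two_mul_add_one_pos b
  calc min C₂ (2 * b * C₂ + (1 + b) * C₁)
      ≤ (3 * b ^ 2 - b) / (3 * b ^ 2 - 2 * b + 1) * C₂ +
          (1 - b) / (3 * b ^ 2 - 2 * b + 1) * (2 * b * C₂ + (1 + b) * C₁) := by
        refine min_le_add_mul ?_ ?_ ?_
        · exact div_nonneg (by nlinarith) hD.le
        · exact div_nonneg (by linarith) hD.le
        · rw [← add_div, div_eq_one_iff_eq hD.ne']
          ring
    _ = (b + 1) / (3 * b ^ 2 - 2 * b + 1) * ((1 - b) * C₁ + b * C₂) := by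
        field_simp
        ring

lemma min_le_two_mul_of_le_one_third (hC₁ : 0 ≤ C₁) (hb : b ≤ 1 / 3) :
    min C₂ (2 * b * C₂ + (1 + b) * C₁) ≤ 2 * ((1 - b) * C₁ + b * C₂) :=
  (min_le_right _ _).trans (by nlinarith)

theorem stmt_2 (C₁ C₂ a b : ℝ) (hC₁ : 0 ≤ C₁) (hC₂ : 0 ≤ C₂)
    (ha : 0 ≤ a) (hb : 0 ≤ b) (hab : a + b = 1) :
    ((1 / 3 : ℝ) ≤ b →
      min C₂ (2 * b * C₂ + (1 + b) * C₁) ≤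
        ((b + 1) / (3 * b ^ 2 - 2 * b + 1)) * (a * C₁ + b * C₂)) ∧
    min C₂ (2 * b * C₂ + (1 + b) * C₁) ≤
      (1 + 3 / (2 * Real.sqrt 2)) * (a * C₁ + b * C₂) ∧
    (1 + 3 / (2 * Real.sqrt 2)) * (a * C₁ + b * C₂) ≤
      2.0607 * (a * C₁ + b * C₂) := by
  obtain rfl : a = 1 - b := by linarith
  have hb₁ : b ≤ 1 := by linarith
  have hX : 0 ≤ (1 - b) * C₁ + b * C₂ := by positivity
  refine ⟨fun h => min_le_of_one_third_le h hb₁, ?_,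
    mul_le_mul_of_nonneg_right one_add_three_div_two_mul_sqrt_two_le hX⟩
  rcases le_total (1 / 3) b with h | h
  · exact (min_le_of_one_third_le h hb₁).trans <| mul_le_mul_of_nonneg_right
      (add_one_div_le_one_add_three_div_two_mul_sqrt_two b) hX
  · exact (min_le_two_mul_of_le_one_third hC₁ h).trans <|
      mul_le_mul_of_nonneg_right two_le_one_add_three_div_two_mul_sqrt_two hX
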